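/- arXiv:1904.06395 — 6 statements merged into one kernel-verified Lean document; each statement's English description precedes it below -/
import Mathlib

section
/- Let X be a finite nonempty type indexing data points and Z a finite type. Let ℓ : X → Z → ℝ be nonnegative, and let q : X → ℝ be strictly positive (a proposed model with q x = ∑ z, p₀ z * ℓ x z for some fixed pmf p₀, though only positivity of q is needed). Let N = card X. Then for every probability mass function p : Z → ℝ with ∑ z, p z * ℓ x z > 0 for all x: -(1/N) * ∑ x, log (∑ z, p z * ℓ x z) ≥ -(1/N) * ∑ x, log (q x) - log (⨆ z, (1/N) * ∑ x, ℓ x z / q x), provided the supremum is positive (Lindsay's lower bound on negative log likelihood). -/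
theorem stmt4 {X Z : Type*} [Fintype X] [Nonempty X] [Fintype Z]
    (ℓ : X → Z → ℝ) (hℓ : ∀ x z, 0 ≤ ℓ x z)
    (q : X → ℝ) (hq : ∀ x, 0 < q x)
    (hsup : 0 < ⨆ z, (1 / (Fintype.card X : ℝ)) * ∑ x, ℓ x z / q x) :
    ∀ p : Z → ℝ, (∀ z, 0 ≤ p z) → (∑ z, p z = 1) →
      (∀ x, 0 < ∑ z, p z * ℓ x z) →
      -(1 / (Fintype.card X : ℝ)) * ∑ x, Real.log (∑ z, p z * ℓ x z) ≥
        -(1 / (Fintype.card X : ℝ)) * ∑ x, Real.log (q x)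
          - Real.log (⨆ z, (1 / (Fintype.card X : ℝ)) * ∑ x, ℓ x z / q x) := by
  intro p hp hp1 hpos
  set N := (Fintype.card X : ℝ) with hNdef
  have hN : 0 < N := by
    rw [hNdef]
    exact_mod_cast (Fintype.card_pos : 0 < Fintype.card X)
  set M := ⨆ z, (1 / N) * ∑ x, ℓ x z / q x with hM
  cases isEmpty_or_nonempty Z with
  | inl h =>
    rw [hM, Real.iSup_of_isEmpty] at hsup
    exact absurd hsup (lt_irrefl 0)
  | inr h =>
    set a : X → ℝ := fun x => (∑ z, p z * ℓ x z) / q x with ha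
    have hapos : ∀ x, 0 < a x := fun x => div_pos (hpos x) (hq x)
    have hw : ∑ _x : X, (1 / N) = 1 := by
      rw [Finset.sum_const, Finset.card_univ, nsmul_eq_mul, ← hNdef]
      field_simp
    have jensen : ∑ x, (1 / N) • Real.log (a x) ≤
        Real.log (∑ x, (1 / N) • a x) := by
      apply (strictConcaveOn_log_Ioi.concaveOn).le_map_sum
      · intro i _; positivity
      · exact hw
      · intro i _; exact Set.mem_Ioi.mpr (hapos i)
    have hsum_pos : 0 < ∑ x, (1 / N) • a x := by
      apply Finset.sum_pos
      · intro i _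
        have := hapos i
        simp only [smul_eq_mul]
        positivity
      · exact Finset.univ_nonempty
    have hzM : ∀ z : Z, (1 / N) * ∑ x, ℓ x z / q x ≤ M :=
      fun z => le_ciSup (Set.Finite.bddAbove (Set.finite_range
        (fun z => (1 / N) * ∑ x, ℓ x z / q x))) z
    have key : ∑ x, (1 / N) • a x ≤ M := by
      have swap : ∑ x, (1 / N) • a x = ∑ z, p z * ((1 / N) * ∑ x, ℓ x z / q x) := by
        simp only [smul_eq_mul, ha]
        calc ∑ x, 1 / N * ((∑ z, p z * ℓ x z) / q x)
            = ∑ x, ∑ z, p z * (1 / N * (ℓ x z / q x)) := by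
              apply Finset.sum_congr rfl
              intro x _
              rw [Finset.sum_div, Finset.mul_sum]
              apply Finset.sum_congr rfl
              intro z _
              ring
          _ = ∑ z, ∑ x, p z * (1 / N * (ℓ x z / q x)) := Finset.sum_comm
          _ = ∑ z, p z * ((1 / N) * ∑ x, ℓ x z / q x) := by
              apply Finset.sum_congr rfl
              intro z _
              rw [Finset.mul_sum, Finset.mul_sum]
      rw [swap]
      calc ∑ z, p z * ((1 / N) * ∑ x, ℓ x z / q x)
          ≤ ∑ z, p z * M := by
            apply Finset.sum_le_sum
            intro z _
            exact mul_le_mul_of_nonneg_left (hzM z) (hp z)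
        _ = M := by rw [← Finset.sum_mul, hp1, one_mul]
    have hlog : Real.log (∑ x, (1 / N) • a x) ≤ Real.log M :=
      Real.log_le_log hsum_pos key
    have hsplit : ∑ x, (1 / N) • Real.log (a x) =
        (1 / N) * ∑ x, Real.log (∑ z, p z * ℓ x z) - (1 / N) * ∑ x, Real.log (q x) := by
      simp only [smul_eq_mul, ha]
      rw [← mul_sub, ← Finset.sum_sub_distrib, ← Finset.mul_sum]
      congr 1
      apply Finset.sum_congr rfl
      intro x _
      exact Real.log_div (ne_of_gt (hpos x)) (ne_of_gt (hq x))
    have hfin : (1 / N) * ∑ x, Real.log (∑ z, p z * ℓ x z)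
        - (1 / N) * ∑ x, Real.log (q x) ≤ Real.log M := by
      rw [← hsplit]; exact jensen.trans hlog
    linarith
end

section
/- Let X be a finite nonempty type, Z a finite type, ℓ : X → Z → ℝ strictly positive, N = card X, and p a probability mass function on Z. Define q x = ∑ z, p z * ℓ x z and the Blahut–Arimoto update p' z = p z * (1/N) * ∑ x, ℓ x z / q x. Then p' is a probability mass function and -(1/N) * ∑ x, log (∑ z, p' z * ℓ x z) ≤ -(1/N) * ∑ x, log (q x), i.e., the update does not increase the average negative log likelihood. -/
theorem stmt7 {X Z : Type*} [Fintype X] [Nonempty X] [Fintype Z]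
    (ℓ : X → Z → ℝ) (hℓ : ∀ x z, 0 < ℓ x z)
    (p : Z → ℝ) (hp0 : ∀ z, 0 ≤ p z) (hp1 : ∑ z, p z = 1)
    (q : X → ℝ) (hqdef : ∀ x, q x = ∑ z, p z * ℓ x z)
    (p' : Z → ℝ)
    (hp'def : ∀ z, p' z = p z * ((1 / (Fintype.card X : ℝ)) * ∑ x, ℓ x z / q x)) :
    (∀ z, 0 ≤ p' z) ∧ (∑ z, p' z = 1) ∧
      -(1 / (Fintype.card X : ℝ)) * ∑ x, Real.log (∑ z, p' z * ℓ x z) ≤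
        -(1 / (Fintype.card X : ℝ)) * ∑ x, Real.log (q x) := by
  have hN : (0:ℝ) < (Fintype.card X : ℝ) := by
    exact_mod_cast Fintype.card_pos
  set N : ℝ := (Fintype.card X : ℝ) with hNdef
  -- some z with p z > 0
  have hex : ∃ z, 0 < p z := by
    by_contra h
    push_neg at h
    have : ∑ z, p z = 0 := Finset.sum_eq_zero fun z _ => le_antisymm (h z) (hp0 z)
    rw [this] at hp1; norm_num at hp1
  have hq : ∀ x, 0 < q x := by
    intro x
    obtain ⟨z0, hz0⟩ := hex
    rw [hqdef]
    exact Finset.sum_pos' (fun z _ => mul_nonneg (hp0 z) (hℓ x z).le)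
      ⟨z0, Finset.mem_univ _, mul_pos hz0 (hℓ x z0)⟩
  set c : Z → ℝ := fun z => (1/N) * ∑ x, ℓ x z / q x with hcdef
  have hc : ∀ z, 0 < c z := fun z =>
    mul_pos (by positivity)
      (Finset.sum_pos (fun x _ => div_pos (hℓ x z) (hq x)) Finset.univ_nonempty)
  have hp' : ∀ z, p' z = p z * c z := hp'def
  have h1 : ∀ z, 0 ≤ p' z := fun z => (hp' z) ▸ mul_nonneg (hp0 z) (hc z).le
  have hsum : ∑ z, p' z = 1 := by
    have e1 : ∀ z, p' z = ∑ x, (1/N) * (p z * ℓ x z / q x) := by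
      intro z
      rw [hp' z, hcdef]
      simp only [Finset.mul_sum]
      exact Finset.sum_congr rfl fun x _ => by ring
    rw [Finset.sum_congr rfl fun z _ => e1 z, Finset.sum_comm]
    have e2 : ∀ x, ∑ z, (1/N) * (p z * ℓ x z / q x) = 1/N := by
      intro x
      rw [← Finset.mul_sum, ← Finset.sum_div, ← hqdef, div_self (hq x).ne', mul_one]
    rw [Finset.sum_congr rfl fun x _ => e2 x, Finset.sum_const, nsmul_eq_mul,
      Finset.card_univ, ← hNdef]
    field_simp
  have hex' : ∃ z, 0 < p' z := by
    by_contra h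
    push_neg at h
    have : ∑ z, p' z = 0 := Finset.sum_eq_zero fun z _ => le_antisymm (h z) (h1 z)
    rw [this] at hsum; norm_num at hsum
  have hq' : ∀ x, 0 < ∑ z, p' z * ℓ x z := by
    intro x
    obtain ⟨z0, hz0⟩ := hex'
    exact Finset.sum_pos' (fun z _ => mul_nonneg (h1 z) (hℓ x z).le)
      ⟨z0, Finset.mem_univ _, mul_pos hz0 (hℓ x z0)⟩
  -- per-x Jensen
  have key : ∀ x, ∑ z, (p z * ℓ x z / q x) * Real.log (c z) ≤
      Real.log (∑ z, p' z * ℓ x z) - Real.log (q x) := by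
    intro x
    set S : ℝ := (∑ z, p' z * ℓ x z) / q x with hSdef
    have hSpos : 0 < S := div_pos (hq' x) (hq x)
    have hw1 : ∑ z, p z * ℓ x z / q x = 1 := by
      rw [← Finset.sum_div, ← hqdef, div_self (hq x).ne']
    have hwc : ∑ z, (p z * ℓ x z / q x) * c z = S := by
      have e : ∀ z, (p z * ℓ x z / q x) * c z = p' z * ℓ x z / q x := fun z => by
        rw [hp' z]; ring
      rw [Finset.sum_congr rfl fun z _ => e z, ← Finset.sum_div, hSdef]
    have step : ∀ z, (p z * ℓ x z / q x) * Real.log (c z)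
        - (p z * ℓ x z / q x) * Real.log S ≤ (p z * ℓ x z / q x) * (c z / S - 1) := by
      intro z
      have hw0 : 0 ≤ p z * ℓ x z / q x :=
        div_nonneg (mul_nonneg (hp0 z) (hℓ x z).le) (hq x).le
      have hlog := Real.log_le_sub_one_of_pos (div_pos (hc z) hSpos)
      rw [Real.log_div (hc z).ne' hSpos.ne'] at hlog
      nlinarith [hlog, hw0]
    have h := Finset.sum_le_sum fun z (_ : z ∈ Finset.univ) => step z
    rw [Finset.sum_sub_distrib, ← Finset.sum_mul, hw1, one_mul] at h
    have hr : ∑ z, (p z * ℓ x z / q x) * (c z / S - 1) = 0 := by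
      have : ∀ z, (p z * ℓ x z / q x) * (c z / S - 1)
          = ((p z * ℓ x z / q x) * c z) / S - (p z * ℓ x z / q x) := by
        intro z; ring
      rw [Finset.sum_congr rfl fun z _ => this z, Finset.sum_sub_distrib,
        ← Finset.sum_div, hwc, div_self hSpos.ne', hw1, sub_self]
    rw [hr] at h
    have hlogS : Real.log S = Real.log (∑ z, p' z * ℓ x z) - Real.log (q x) := by
      rw [hSdef, Real.log_div (hq' x).ne' (hq x).ne']
    linarith [h, hlogS.symm.le, hlogS.le]
  have hsumkey := Finset.sum_le_sum fun x (_ : x ∈ Finset.univ) => key x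
  rw [Finset.sum_sub_distrib] at hsumkey
  -- LHS of hsumkey equals N * ∑ z, p' z * log (c z)
  have hlhs : ∑ x, ∑ z, (p z * ℓ x z / q x) * Real.log (c z)
      = N * ∑ z, p' z * Real.log (c z) := by
    rw [Finset.sum_comm, Finset.mul_sum]
    refine Finset.sum_congr rfl fun z _ => ?_
    have : ∑ x, (p z * ℓ x z / q x) * Real.log (c z)
        = (p z * Real.log (c z)) * ∑ x, ℓ x z / q x := by
      rw [Finset.mul_sum]
      exact Finset.sum_congr rfl fun x _ => by ring
    rw [this]
    have hcz : ∑ x, ℓ x z / q x = N * c z := by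
      rw [hcdef]; field_simp
    rw [hcz, hp' z]; ring
  have lower : 0 ≤ ∑ z, p' z * Real.log (c z) := by
    have e : ∀ z, p' z - p z ≤ p' z * Real.log (c z) := by
      intro z
      have hlog := Real.log_le_sub_one_of_pos (inv_pos.mpr (hc z))
      rw [Real.log_inv] at hlog
      have hpz : p' z * (c z)⁻¹ = p z := by
        rw [hp' z, mul_assoc, mul_inv_cancel₀ (hc z).ne', mul_one]
      nlinarith [h1 z, hlog, hpz]
    calc (0:ℝ) = ∑ z, (p' z - p z) := by
          rw [Finset.sum_sub_distrib, hsum, hp1, sub_self]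
      _ ≤ _ := Finset.sum_le_sum fun z _ => e z
  rw [hlhs] at hsumkey
  have hfin : ∑ x, Real.log (q x) ≤ ∑ x, Real.log (∑ z, p' z * ℓ x z) := by
    nlinarith [mul_nonneg hN.le lower]
  refine ⟨h1, hsum, ?_⟩
  have h1N : (0:ℝ) ≤ 1 / N := by positivity
  nlinarith [mul_le_mul_of_nonneg_left hfin h1N]
end

section
/- Let X and Z be finite types with X nonempty, ℓ : X → Z → ℝ strictly positive, α > 0, and N = card X. Let P_X be the uniform distribution on X. Then min over probability mass functions p on Z of ( -(1/N) * ∑ x, log (∑ z, p z * (ℓ x z)^α) ) equals min over channels Q : X → (pmf on Z) of ( I(X;Z) - α * (1/N) * ∑ x, ∑ z, Q x z * log (ℓ x z) ), where I(X;Z) = (1/N) * ∑ x, ∑ z, Q x z * log (Q x z / ((1/N) * ∑ x', Q x' z)) is the mutual information induced by the joint distribution (1/N) * Q x z. -/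
/-!
Both sides are minima of one function of two variables. For a prior `p` and a channel `Q` let
`L(p, Q)` be the Lagrangian in which the marginal of `Q` inside the mutual information is replaced
by `p`. For fixed `p`, Gibbs' inequality in each row `x` gives `L(p, Q) ≥ F(p)`, the prior
objective, with equality at the posterior `Q x ∝ p · ℓ x ^ α`. For fixed `Q`, `L(p, Q)` exceeds
`L(marginal Q, Q)` by the relative entropy of `marginal Q` to `p`, which is nonnegative. Hence
`min_Q L(marginal Q, Q) = min_Q min_p L(p, Q) = min_p F(p)`.
-/

open Finset Real

lemma mul_log_div_le_sub {a b : ℝ} (ha : 0 ≤ a) (hb : 0 ≤ b) (hab : 0 < a → 0 < b) :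
    a * log (b / a) ≤ b - a := by
  rcases ha.eq_or_lt with rfl | ha
  · simpa using hb
  calc a * log (b / a) ≤ a * (b / a - 1) :=
        mul_le_mul_of_nonneg_left (log_le_sub_one_of_pos (div_pos (hab ha) ha)) ha.le
    _ = b - a := by field_simp

lemma sum_mul_log_div_le_sum_sub_sum {ι : Type*} (s : Finset ι) {a b : ι → ℝ}
    (ha : ∀ i ∈ s, 0 ≤ a i) (hb : ∀ i ∈ s, 0 ≤ b i) (hab : ∀ i ∈ s, 0 < a i → 0 < b i) :
    ∑ i ∈ s, a i * log (b i / a i) ≤ ∑ i ∈ s, b i - ∑ i ∈ s, a i := by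
  rw [← sum_sub_distrib]
  exact sum_le_sum fun i hi => mul_log_div_le_sub (ha i hi) (hb i hi) (hab i hi)

section FiniteSums

variable {ι : Type*} [Fintype ι] {q r : ι → ℝ}

lemma sum_pos_of_sum_eq_one (hq1 : ∑ i, q i = 1) (hr : ∀ i, 0 ≤ r i)
    (hqr : ∀ i, 0 < q i → 0 < r i) : 0 < ∑ i, r i := by
  obtain ⟨i, -, hi⟩ := exists_lt_of_sum_lt (f := 0) (g := q) (s := univ) (by simp [hq1])
  exact sum_pos' (fun j _ => hr j) ⟨i, mem_univ i, hqr i hi⟩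

lemma neg_log_sum_le_sum_mul_log_div (hq : ∀ i, 0 ≤ q i) (hq1 : ∑ i, q i = 1)
    (hr : ∀ i, 0 ≤ r i) (hqr : ∀ i, 0 < q i → 0 < r i) :
    -log (∑ i, r i) ≤ ∑ i, q i * log (q i / r i) := by
  set S := ∑ i, r i
  have hS : 0 < S := sum_pos_of_sum_eq_one hq1 hr hqr
  have hterm : ∀ i, q i * log (q i / r i) = -(q i * log (r i / S / q i)) - q i * log S := by
    intro i
    rcases (hq i).eq_or_lt with h | h
    · simp [← h]
    have hri := hqr i h
    rw [log_div h.ne' hri.ne', log_div (by positivity) h.ne', log_div hri.ne' hS.ne']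
    ring
  have hKL : ∑ i, q i * log (r i / S / q i) ≤ 0 := by
    refine (sum_mul_log_div_le_sum_sub_sum univ (fun i _ => hq i)
      (fun i _ => div_nonneg (hr i) hS.le) fun i _ h => div_pos (hqr i h) hS).trans_eq ?_
    rw [← sum_div, div_self hS.ne', hq1, sub_self]
  simp only [hterm, sum_sub_distrib, sum_neg_distrib, ← sum_mul, hq1, one_mul]
  linarith

end FiniteSums

noncomputable section

section Posterior

variable {X Z : Type*} [Fintype Z] {ℓ : X → Z → ℝ} {α : ℝ} {p : Z → ℝ}

def posterior (ℓ : X → Z → ℝ) (α : ℝ) (p : Z → ℝ) (x : X) (z : Z) : ℝ :=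
  p z * ℓ x z ^ α / ∑ z', p z' * ℓ x z' ^ α

lemma sum_mul_rpow_pos (hℓ : ∀ x z, 0 < ℓ x z) (hp : ∀ z, 0 ≤ p z) (hp1 : ∑ z, p z = 1)
    (x : X) : 0 < ∑ z, p z * ℓ x z ^ α :=
  sum_pos_of_sum_eq_one hp1 (fun z => mul_nonneg (hp z) (rpow_nonneg (hℓ x z).le α))
    fun z hz => mul_pos hz (rpow_pos_of_pos (hℓ x z) α)

lemma posterior_nonneg (hℓ : ∀ x z, 0 < ℓ x z) (hp : ∀ z, 0 ≤ p z) (hp1 : ∑ z, p z = 1)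
    (x : X) (z : Z) : 0 ≤ posterior ℓ α p x z :=
  div_nonneg (mul_nonneg (hp z) (rpow_nonneg (hℓ x z).le α)) (sum_mul_rpow_pos hℓ hp hp1 x).le

lemma sum_posterior (hℓ : ∀ x z, 0 < ℓ x z) (hp : ∀ z, 0 ≤ p z) (hp1 : ∑ z, p z = 1)
    (x : X) : ∑ z, posterior ℓ α p x z = 1 := by
  simp only [posterior, ← sum_div]
  exact div_self (sum_mul_rpow_pos hℓ hp hp1 x).ne'

lemma pos_of_posterior_pos (hp : ∀ z, 0 ≤ p z) {x : X} {z : Z}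
    (h : 0 < posterior ℓ α p x z) : 0 < p z := by
  refine (hp z).lt_of_ne fun hpz => ?_
  simp [posterior, ← hpz] at h

end Posterior

section Marginal

variable {X Z : Type*} [Fintype X] {Q : X → Z → ℝ}

def marginal (Q : X → Z → ℝ) (z : Z) : ℝ :=
  (1 / (Fintype.card X : ℝ)) * ∑ x, Q x z

lemma marginal_nonneg (hQ : ∀ x z, 0 ≤ Q x z) (z : Z) : 0 ≤ marginal Q z :=
  mul_nonneg (by positivity) (sum_nonneg fun x _ => hQ x z)

lemma marginal_pos_of_pos (hQ : ∀ x z, 0 ≤ Q x z) {x : X} {z : Z} (h : 0 < Q x z) :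
    0 < marginal Q z :=
  mul_pos (by simp [Fintype.card_pos_iff.mpr ⟨x⟩])
    (h.trans_le (single_le_sum (fun x _ => hQ x z) (mem_univ x)))

lemma exists_pos_of_marginal_pos {z : Z} (h : 0 < marginal Q z) : ∃ x, 0 < Q x z := by
  by_contra! hQ
  have : marginal Q z ≤ 0 :=
    mul_nonpos_of_nonneg_of_nonpos (by positivity) (sum_nonpos fun x _ => hQ x)
  linarith

lemma sum_marginal [Fintype Z] [Nonempty X] (hQ1 : ∀ x, ∑ z, Q x z = 1) :
    ∑ z, marginal Q z = 1 := by
  simp only [marginal, ← mul_sum]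
  rw [sum_comm, sum_congr rfl fun x _ => hQ1 x, sum_const, card_univ, nsmul_one]
  field_simp

end Marginal

section Lagrangian

variable {X Z : Type*} [Fintype X] [Fintype Z] {ℓ : X → Z → ℝ} {α : ℝ} {p : Z → ℝ}
  {Q : X → Z → ℝ}

def priorObjective (ℓ : X → Z → ℝ) (α : ℝ) (p : Z → ℝ) : ℝ :=
  -(1 / (Fintype.card X : ℝ)) * ∑ x, log (∑ z, p z * ℓ x z ^ α)

/-- At `p = marginal Q` this is the rate-distortion Lagrangian `I(X;Z) - α 𝔼[log ℓ]`; for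
other `p` its first term is the relative entropy of the joint law to `uniform ⊗ p`. A term with
`p z = 0 < Q x z` gets the junk value `log 0 = 0`, so `p` must charge every `z` that `Q` does. -/
def lagrangian (ℓ : X → Z → ℝ) (α : ℝ) (p : Z → ℝ) (Q : X → Z → ℝ) : ℝ :=
  (1 / (Fintype.card X : ℝ)) * ∑ x, ∑ z, Q x z * log (Q x z / p z)
    - α * ((1 / (Fintype.card X : ℝ)) * ∑ x, ∑ z, Q x z * log (ℓ x z))

lemma priorObjective_eq_mul_sum :
    priorObjective ℓ α p =
      (1 / (Fintype.card X : ℝ)) * ∑ x, -log (∑ z, p z * ℓ x z ^ α) := by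
  rw [priorObjective, sum_neg_distrib]
  ring

lemma lagrangian_eq_mul_sum :
    lagrangian ℓ α p Q = (1 / (Fintype.card X : ℝ)) *
      ∑ x, (∑ z, Q x z * log (Q x z / p z) - α * ∑ z, Q x z * log (ℓ x z)) := by
  simp only [lagrangian, sum_sub_distrib, ← mul_sum]
  ring

lemma priorObjective_le_lagrangian (hℓ : ∀ x z, 0 < ℓ x z) (hp : ∀ z, 0 ≤ p z)
    (hQ : ∀ x z, 0 ≤ Q x z) (hQ1 : ∀ x, ∑ z, Q x z = 1) (hQp : ∀ x z, 0 < Q x z → 0 < p z) :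
    priorObjective ℓ α p ≤ lagrangian ℓ α p Q := by
  have hrow : ∀ x, -log (∑ z, p z * ℓ x z ^ α) ≤
      ∑ z, Q x z * log (Q x z / p z) - α * ∑ z, Q x z * log (ℓ x z) := by
    intro x
    refine (neg_log_sum_le_sum_mul_log_div (hQ x) (hQ1 x)
      (fun z => mul_nonneg (hp z) (rpow_nonneg (hℓ x z).le α))
      fun z hz => mul_pos (hQp x z hz) (rpow_pos_of_pos (hℓ x z) α)).trans_eq ?_
    rw [mul_sum, ← sum_sub_distrib]
    refine sum_congr rfl fun z _ => ?_
    rcases (hQ x z).eq_or_lt with h | h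
    · simp [← h]
    rw [← div_div, log_div (div_pos h (hQp x z h)).ne' (rpow_pos_of_pos (hℓ x z) α).ne',
      log_rpow (hℓ x z)]
    ring
  rw [priorObjective_eq_mul_sum, lagrangian_eq_mul_sum]
  gcongr with x
  exact hrow x

lemma lagrangian_posterior (hℓ : ∀ x z, 0 < ℓ x z) (hp : ∀ z, 0 ≤ p z) (hp1 : ∑ z, p z = 1) :
    lagrangian ℓ α p (posterior ℓ α p) = priorObjective ℓ α p := by
  rw [priorObjective_eq_mul_sum, lagrangian_eq_mul_sum]
  congr 1
  refine sum_congr rfl fun x _ => ?_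
  set S := ∑ z, p z * ℓ x z ^ α
  have hS : 0 < S := sum_mul_rpow_pos hℓ hp hp1 x
  have hterm : ∀ z, posterior ℓ α p x z * log (posterior ℓ α p x z / p z)
      - α * (posterior ℓ α p x z * log (ℓ x z)) = -(posterior ℓ α p x z * log S) := by
    intro z
    rcases (hp z).eq_or_lt with h | h
    · simp [posterior, ← h]
    have hratio : posterior ℓ α p x z / p z = ℓ x z ^ α / S := by
      rw [show posterior ℓ α p x z = p z * ℓ x z ^ α / S from rfl]
      field_simp
    rw [hratio, log_div (rpow_pos_of_pos (hℓ x z) α).ne' hS.ne', log_rpow (hℓ x z)]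
    ring
  rw [mul_sum, ← sum_sub_distrib, sum_congr rfl fun z _ => hterm z, sum_neg_distrib, ← sum_mul,
    sum_posterior hℓ hp hp1, one_mul]

lemma lagrangian_marginal_le [Nonempty X] (hp : ∀ z, 0 ≤ p z) (hp1 : ∑ z, p z = 1)
    (hQ : ∀ x z, 0 ≤ Q x z) (hQ1 : ∀ x, ∑ z, Q x z = 1) (hQp : ∀ x z, 0 < Q x z → 0 < p z) :
    lagrangian ℓ α (marginal Q) Q ≤ lagrangian ℓ α p Q := by
  have hsplit : ∀ x z, Q x z * log (Q x z / marginal Q z) =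
      Q x z * log (Q x z / p z) + Q x z * log (p z / marginal Q z) := by
    intro x z
    rcases (hQ x z).eq_or_lt with h | h
    · simp [← h]
    have hm := marginal_pos_of_pos hQ h
    have hpz := hQp x z h
    rw [log_div h.ne' hm.ne', log_div h.ne' hpz.ne', log_div hpz.ne' hm.ne']
    ring
  have hswap : (1 / (Fintype.card X : ℝ)) * ∑ x, ∑ z, Q x z * log (p z / marginal Q z) =
      ∑ z, marginal Q z * log (p z / marginal Q z) := by
    rw [sum_comm, mul_sum]
    simp only [← sum_mul, ← mul_assoc]
    rfl
  have hKL : ∑ z, marginal Q z * log (p z / marginal Q z) ≤ 0 := by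
    refine (sum_mul_log_div_le_sum_sub_sum univ (fun z _ => marginal_nonneg hQ z)
      (fun z _ => hp z) fun z _ hz => ?_).trans_eq (by rw [hp1, sum_marginal hQ1, sub_self])
    obtain ⟨x, hx⟩ := exists_pos_of_marginal_pos hz
    exact hQp x z hx
  simp only [lagrangian, hsplit, sum_add_distrib, mul_add, hswap]
  linarith

end Lagrangian

end

theorem stmt8_general {X Z : Type*} [Fintype X] [Nonempty X] [Fintype Z]
    (ℓ : X → Z → ℝ) (hℓ : ∀ x z, 0 < ℓ x z) (α : ℝ) :
    sInf {y : ℝ | ∃ p : Z → ℝ, (∀ z, 0 ≤ p z) ∧ (∑ z, p z = 1) ∧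
        y = -(1 / (Fintype.card X : ℝ)) * ∑ x, Real.log (∑ z, p z * (ℓ x z) ^ α)} =
    sInf {y : ℝ | ∃ Q : X → Z → ℝ, (∀ x z, 0 ≤ Q x z) ∧ (∀ x, ∑ z, Q x z = 1) ∧
        y = (1 / (Fintype.card X : ℝ)) * ∑ x, ∑ z,
              Q x z * Real.log (Q x z / ((1 / (Fintype.card X : ℝ)) * ∑ x', Q x' z))
          - α * ((1 / (Fintype.card X : ℝ)) * ∑ x, ∑ z,
              Q x z * Real.log (ℓ x z))} := by
  apply csInf_eq_csInf_of_forall_exists_le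
  · rintro _ ⟨p, hp, hp1, rfl⟩
    set Q := posterior ℓ α p
    have hQ : ∀ x z, 0 ≤ Q x z := posterior_nonneg hℓ hp hp1
    have hQ1 : ∀ x, ∑ z, Q x z = 1 := sum_posterior hℓ hp hp1
    refine ⟨lagrangian ℓ α (marginal Q) Q, ⟨Q, hQ, hQ1, rfl⟩, ?_⟩
    calc lagrangian ℓ α (marginal Q) Q
        ≤ lagrangian ℓ α p Q :=
          lagrangian_marginal_le hp hp1 hQ hQ1 fun _ _ => pos_of_posterior_pos hp
      _ = priorObjective ℓ α p := lagrangian_posterior hℓ hp hp1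
  · rintro _ ⟨Q, hQ, hQ1, rfl⟩
    refine ⟨priorObjective ℓ α (marginal Q),
      ⟨marginal Q, marginal_nonneg hQ, sum_marginal hQ1, rfl⟩, ?_⟩
    exact priorObjective_le_lagrangian hℓ (marginal_nonneg hQ) hQ hQ1
      fun _ _ => marginal_pos_of_pos hQ

theorem stmt8 {X Z : Type*} [Fintype X] [Nonempty X] [Fintype Z]
    (ℓ : X → Z → ℝ) (hℓ : ∀ x z, 0 < ℓ x z) (α : ℝ) (hα : 0 < α) :
    sInf {y : ℝ | ∃ p : Z → ℝ, (∀ z, 0 ≤ p z) ∧ (∑ z, p z = 1) ∧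
        y = -(1 / (Fintype.card X : ℝ)) * ∑ x, Real.log (∑ z, p z * (ℓ x z) ^ α)} =
    sInf {y : ℝ | ∃ Q : X → Z → ℝ, (∀ x z, 0 ≤ Q x z) ∧ (∀ x, ∑ z, Q x z = 1) ∧
        y = (1 / (Fintype.card X : ℝ)) * ∑ x, ∑ z,
              Q x z * Real.log (Q x z / ((1 / (Fintype.card X : ℝ)) * ∑ x', Q x' z))
          - α * ((1 / (Fintype.card X : ℝ)) * ∑ x, ∑ z,
              Q x z * Real.log (ℓ x z))} :=
  stmt8_general ℓ hℓ α
end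

section
/- Let X be a finite nonempty type, Z a finite type, ℓ : X → Z → ℝ strictly positive, N = card X, and let p be a probability mass function on Z with q x = ∑ z, p z * ℓ x z. Define c z = (1/N) * ∑ x, ℓ x z / q x and suppose max_z c z ≤ 1. Then p achieves the minimum of the average negative log likelihood F(p') = -(1/N) * ∑ x, log (∑ z, p' z * ℓ x z) over probability mass functions p' on Z, and moreover the gap in Lindsay's bound is zero: F(p) = min F = -(1/N) * ∑ x, log (q x). -/
theorem stmt14 {X Z : Type*} [Fintype X] [Nonempty X] [Fintype Z]
    (ℓ : X → Z → ℝ) (hℓ : ∀ x z, 0 < ℓ x z)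
    (p : Z → ℝ) (hp0 : ∀ z, 0 ≤ p z) (hp1 : ∑ z, p z = 1)
    (q : X → ℝ) (hqdef : ∀ x, q x = ∑ z, p z * ℓ x z)
    (c : Z → ℝ) (hcdef : ∀ z, c z = (1 / (Fintype.card X : ℝ)) * ∑ x, ℓ x z / q x)
    (hc : ∀ z, c z ≤ 1) :
    (∀ p' : Z → ℝ, (∀ z, 0 ≤ p' z) → (∑ z, p' z = 1) →
      -(1 / (Fintype.card X : ℝ)) * ∑ x, Real.log (∑ z, p z * ℓ x z) ≤
        -(1 / (Fintype.card X : ℝ)) * ∑ x, Real.log (∑ z, p' z * ℓ x z)) ∧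
    -(1 / (Fintype.card X : ℝ)) * ∑ x, Real.log (∑ z, p z * ℓ x z) =
      -(1 / (Fintype.card X : ℝ)) * ∑ x, Real.log (q x) := by
  have hN : (0:ℝ) < (Fintype.card X : ℝ) := by
    exact_mod_cast Fintype.card_pos
  have key : ∀ (p' : Z → ℝ), (∀ z, 0 ≤ p' z) → (∑ z, p' z = 1) →
      ∀ x, 0 < ∑ z, p' z * ℓ x z := by
    intro p' h0 h1 x
    obtain ⟨z0, hz0⟩ : ∃ z, 0 < p' z := by
      by_contra h
      push_neg at h
      have : ∑ z, p' z = 0 :=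
        Finset.sum_eq_zero fun z _ => le_antisymm (h z) (h0 z)
      simp [this] at h1
    exact Finset.sum_pos' (fun z _ => mul_nonneg (h0 z) (hℓ x z).le)
      ⟨z0, Finset.mem_univ _, mul_pos hz0 (hℓ x z0)⟩
  have hq : ∀ x, 0 < q x := fun x => (hqdef x) ▸ key p hp0 hp1 x
  constructor
  · intro p' h0 h1
    have hq' : ∀ x, 0 < ∑ z, p' z * ℓ x z := key p' h0 h1
    -- pointwise log bound
    have hlog : ∀ x, Real.log (∑ z, p' z * ℓ x z) - Real.log (q x) ≤
        (∑ z, p' z * ℓ x z) / q x - 1 := by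
      intro x
      rw [← Real.log_div (hq' x).ne' (hq x).ne']
      exact Real.log_le_sub_one_of_pos (div_pos (hq' x) (hq x))
    have hsum : ∑ x, (∑ z, p' z * ℓ x z) / q x ≤ (Fintype.card X : ℝ) := by
      have hswap : ∑ x, (∑ z, p' z * ℓ x z) / q x
          = ∑ z, p' z * ∑ x, ℓ x z / q x := by
        simp_rw [Finset.sum_div, Finset.mul_sum, mul_div_assoc]
        exact Finset.sum_comm
      rw [hswap]
      calc ∑ z, p' z * ∑ x, ℓ x z / q x
          ≤ ∑ z, p' z * (Fintype.card X : ℝ) := by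
            refine Finset.sum_le_sum fun z _ => mul_le_mul_of_nonneg_left ?_ (h0 z)
            have := hcdef z
            have hcz := hc z
            have : ∑ x, ℓ x z / q x = (Fintype.card X : ℝ) * c z := by
              field_simp at this ⊢
              linarith
            rw [this]
            nlinarith
        _ = (Fintype.card X : ℝ) := by rw [← Finset.sum_mul, h1, one_mul]
    have main : ∑ x, Real.log (∑ z, p' z * ℓ x z) ≤ ∑ x, Real.log (q x) := by
      have h2 : ∑ x, (Real.log (∑ z, p' z * ℓ x z) - Real.log (q x)) ≤
          ∑ x, ((∑ z, p' z * ℓ x z) / q x - 1) :=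
        Finset.sum_le_sum fun x _ => hlog x
      rw [Finset.sum_sub_distrib, Finset.sum_sub_distrib] at h2
      simp only [Finset.sum_const, Finset.card_univ, nsmul_eq_mul, mul_one] at h2
      linarith
    have heq : ∑ x, Real.log (∑ z, p z * ℓ x z) = ∑ x, Real.log (q x) := by
      simp_rw [← hqdef]
    rw [heq]
    have h1N : (0:ℝ) < 1 / (Fintype.card X : ℝ) := by positivity
    nlinarith
  · simp_rw [← hqdef]
end

section
/- Let X be a finite nonempty type, Z a finite type, ℓ : X → Z → ℝ strictly positive, N = card X, and p₁, p₂ probability mass functions on Z with model evidences q_i x = ∑ z, p_i z * ℓ x z. If -(1/N) * ∑ x, log (q₂ x) < -(1/N) * ∑ x, log (q₁ x), then max_z (1/N) * ∑ x, ℓ x z / q₁ x > 1. -/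
theorem stmt15 {X Z : Type*} [Fintype X] [Nonempty X] [Fintype Z]
    (ℓ : X → Z → ℝ) (hℓ : ∀ x z, 0 < ℓ x z)
    (p₁ p₂ : Z → ℝ) (hp₁0 : ∀ z, 0 ≤ p₁ z) (hp₁1 : ∑ z, p₁ z = 1)
    (hp₂0 : ∀ z, 0 ≤ p₂ z) (hp₂1 : ∑ z, p₂ z = 1)
    (q₁ q₂ : X → ℝ) (hq₁ : ∀ x, q₁ x = ∑ z, p₁ z * ℓ x z)
    (hq₂ : ∀ x, q₂ x = ∑ z, p₂ z * ℓ x z)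
    (hlt : -(1 / (Fintype.card X : ℝ)) * ∑ x, Real.log (q₂ x) <
      -(1 / (Fintype.card X : ℝ)) * ∑ x, Real.log (q₁ x)) :
    ∃ z, 1 < (1 / (Fintype.card X : ℝ)) * ∑ x, ℓ x z / q₁ x := by
  by_contra hc
  push_neg at hc
  set N : ℝ := (Fintype.card X : ℝ) with hN
  have hN0 : 0 < N := by
    have h := Fintype.card_pos (α := X)
    rw [hN]
    exact_mod_cast h
  -- positivity of q₁, q₂
  have hq₁pos : ∀ x, 0 < q₁ x := by
    intro x
    rw [hq₁]
    obtain ⟨z₀, hz₀⟩ : ∃ z, 0 < p₁ z := by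
      by_contra h
      push_neg at h
      have : ∑ z, p₁ z = 0 := Finset.sum_eq_zero fun z _ => le_antisymm (h z) (hp₁0 z)
      simp [this] at hp₁1
    exact Finset.sum_pos' (fun z _ => mul_nonneg (hp₁0 z) (hℓ x z).le)
      ⟨z₀, Finset.mem_univ _, mul_pos hz₀ (hℓ x z₀)⟩
  have hq₂pos : ∀ x, 0 < q₂ x := by
    intro x
    rw [hq₂]
    obtain ⟨z₀, hz₀⟩ : ∃ z, 0 < p₂ z := by
      by_contra h
      push_neg at h
      have : ∑ z, p₂ z = 0 := Finset.sum_eq_zero fun z _ => le_antisymm (h z) (hp₂0 z)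
      simp [this] at hp₂1
    exact Finset.sum_pos' (fun z _ => mul_nonneg (hp₂0 z) (hℓ x z).le)
      ⟨z₀, Finset.mem_univ _, mul_pos hz₀ (hℓ x z₀)⟩
  -- from hc: for each z, ∑ x, ℓ x z / q₁ x ≤ N
  have hcz : ∀ z, ∑ x, ℓ x z / q₁ x ≤ N := by
    intro z
    have := hc z
    rw [div_mul_eq_mul_div, one_mul, div_le_one hN0] at this
    linarith
  -- key: ∑ x, log (q₂ x) ≤ ∑ x, log (q₁ x)
  have key : ∑ x, Real.log (q₂ x) ≤ ∑ x, Real.log (q₁ x) := by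
    have h1 : ∑ x, (Real.log (q₂ x) - Real.log (q₁ x)) ≤ ∑ x, (q₂ x / q₁ x - 1) := by
      apply Finset.sum_le_sum
      intro x _
      have : Real.log (q₂ x / q₁ x) ≤ q₂ x / q₁ x - 1 :=
        Real.log_le_sub_one_of_pos (div_pos (hq₂pos x) (hq₁pos x))
      rwa [Real.log_div (hq₂pos x).ne' (hq₁pos x).ne'] at this
    have h2 : ∑ x, q₂ x / q₁ x ≤ N := by
      have hswap : ∑ x, q₂ x / q₁ x = ∑ z, p₂ z * ∑ x, ℓ x z / q₁ x := by
        have : ∀ x, q₂ x / q₁ x = ∑ z, p₂ z * (ℓ x z / q₁ x) := by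
          intro x
          rw [hq₂, Finset.sum_div]
          exact Finset.sum_congr rfl fun z _ => by ring
        simp_rw [this, Finset.mul_sum]
        exact Finset.sum_comm
      rw [hswap]
      calc ∑ z, p₂ z * ∑ x, ℓ x z / q₁ x ≤ ∑ z, p₂ z * N :=
            Finset.sum_le_sum fun z _ => mul_le_mul_of_nonneg_left (hcz z) (hp₂0 z)
        _ = N := by rw [← Finset.sum_mul, hp₂1, one_mul]
    have h3 : ∑ x, (q₂ x / q₁ x - 1) = (∑ x, q₂ x / q₁ x) - N := by
      rw [Finset.sum_sub_distrib]
      simp [hN, Finset.card_univ]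
    rw [Finset.sum_sub_distrib] at h1
    linarith
  have : ∑ x, Real.log (q₁ x) < ∑ x, Real.log (q₂ x) := by
    have hpos : 0 < 1 / N := by positivity
    nlinarith [hlt]
  linarith
end

section
/- Let X be a finite nonempty type, Z a finite type, N = card X, and Q : X → Z → ℝ a channel (each Q x a pmf). With joint μ(x,z) = (1/N) * Q x z, marginal m z = (1/N) * ∑ x, Q x z, and ℓ : X → Z → ℝ strictly positive, it holds that -(1/N) * ∑ x, log (∑ z, m z * ℓ x z) ≤ I(X;Z) + (1/N) * ∑ x ∑ z, Q x z * (-log (ℓ x z)), where I(X;Z) = (1/N) * ∑ x ∑ z, Q x z * log (Q x z / m z). -/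
open Finset

lemma term_ineq16 (q M l S : ℝ) (hq : 0 ≤ q) (hM : 0 ≤ M) (hqM : 0 < q → 0 < M)
    (hl : 0 < l) (hS : 0 < S) :
    q - M * l / S ≤ q * Real.log (q / M) + q * (-Real.log l) + q * Real.log S := by
  rcases eq_or_lt_of_le hq with h | h
  · rw [← h]
    have : 0 ≤ M * l / S := by positivity
    simpa using this
  · have hM' := hqM h
    have hx : 0 < M * l / (q * S) := by positivity
    have hlog := Real.log_le_sub_one_of_pos hx
    have e1 : Real.log (M * l / (q * S)) =
        Real.log M + Real.log l - Real.log q - Real.log S := by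
      rw [Real.log_div (by positivity) (by positivity),
        Real.log_mul hM'.ne' hl.ne', Real.log_mul h.ne' hS.ne']
      ring
    rw [e1] at hlog
    have h2 := mul_le_mul_of_nonneg_left hlog hq
    have e3 : q * (M * l / (q * S) - 1) = M * l / S - q := by
      field_simp
    rw [e3] at h2
    rw [Real.log_div h.ne' hM'.ne']
    nlinarith [h2]

lemma point16 {Z : Type*} [Fintype Z] (q M l : Z → ℝ)
    (hq0 : ∀ z, 0 ≤ q z) (hq1 : ∑ z, q z = 1)
    (hM0 : ∀ z, 0 ≤ M z) (hM1 : ∑ z, M z = 1)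
    (hqM : ∀ z, 0 < q z → 0 < M z) (hl : ∀ z, 0 < l z) :
    -Real.log (∑ z, M z * l z) ≤
      ∑ z, q z * Real.log (q z / M z) + ∑ z, q z * (-Real.log (l z)) := by
  set S := ∑ z, M z * l z with hS
  have hSpos : 0 < S := by
    have hex : ∃ z ∈ Finset.univ, 0 < M z := by
      by_contra hcon; push_neg at hcon
      have : ∑ z, M z = 0 :=
        Finset.sum_eq_zero fun z _ => le_antisymm (hcon z (mem_univ z)) (hM0 z)
      rw [this] at hM1; norm_num at hM1
    obtain ⟨z, _, hz⟩ := hex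
    exact Finset.sum_pos' (fun z _ => mul_nonneg (hM0 z) (hl z).le)
      ⟨z, mem_univ z, mul_pos hz (hl z)⟩
  have hsum : ∑ z, (q z - M z * l z / S) ≤ ∑ z, (q z * Real.log (q z / M z)
      + q z * (-Real.log (l z)) + q z * Real.log S) :=
    Finset.sum_le_sum (fun z _ =>
      term_ineq16 (q z) (M z) (l z) S (hq0 z) (hM0 z) (hqM z) (hl z) hSpos)
  have e1 : ∑ z, (q z - M z * l z / S) = 0 := by
    rw [Finset.sum_sub_distrib, hq1, ← Finset.sum_div, ← hS, div_self hSpos.ne']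
    ring
  have e2 : ∑ z, (q z * Real.log (q z / M z) + q z * (-Real.log (l z))
      + q z * Real.log S)
      = (∑ z, q z * Real.log (q z / M z)) + (∑ z, q z * (-Real.log (l z)))
        + Real.log S := by
    rw [Finset.sum_add_distrib, Finset.sum_add_distrib, ← Finset.sum_mul, hq1, one_mul]
  rw [e1, e2] at hsum
  linarith

theorem stmt16 {X Z : Type*} [Fintype X] [Nonempty X] [Fintype Z]
    (ℓ : X → Z → ℝ) (hℓ : ∀ x z, 0 < ℓ x z)
    (Q : X → Z → ℝ) (hQ0 : ∀ x z, 0 ≤ Q x z) (hQ1 : ∀ x, ∑ z, Q x z = 1)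
    (m : Z → ℝ) (hmdef : ∀ z, m z = (1 / (Fintype.card X : ℝ)) * ∑ x, Q x z)
    (I : ℝ) (hIdef : I = (1 / (Fintype.card X : ℝ)) *
      ∑ x, ∑ z, Q x z * Real.log (Q x z / m z)) :
    -(1 / (Fintype.card X : ℝ)) * ∑ x, Real.log (∑ z, m z * ℓ x z) ≤
      I + (1 / (Fintype.card X : ℝ)) * ∑ x, ∑ z, Q x z * (-Real.log (ℓ x z)) := by
  have hN : (0 : ℝ) < (Fintype.card X : ℝ) := by
    exact_mod_cast Fintype.card_pos
  have hM0 : ∀ z, 0 ≤ m z := fun z => by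
    rw [hmdef z]
    exact mul_nonneg (by positivity) (Finset.sum_nonneg fun x _ => hQ0 x z)
  have hM1 : ∑ z, m z = 1 := by
    simp only [hmdef]
    rw [← Finset.mul_sum, Finset.sum_comm]
    simp only [hQ1]
    rw [Finset.sum_const, Finset.card_univ, nsmul_eq_mul]
    field_simp
  have hqM : ∀ x z, 0 < Q x z → 0 < m z := by
    intro x z hq
    rw [hmdef z]
    have : Q x z ≤ ∑ x', Q x' z :=
      Finset.single_le_sum (fun x' _ => hQ0 x' z) (mem_univ x)
    have h2 : 0 < ∑ x', Q x' z := lt_of_lt_of_le hq this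
    positivity
  have key : ∀ x, -Real.log (∑ z, m z * ℓ x z) ≤
      ∑ z, Q x z * Real.log (Q x z / m z) + ∑ z, Q x z * (-Real.log (ℓ x z)) :=
    fun x => point16 (Q x) m (ℓ x) (hQ0 x) (hQ1 x) hM0 hM1 (hqM x) (hℓ x)
  have hsum := Finset.sum_le_sum (fun x (_ : x ∈ Finset.univ) => key x)
  rw [Finset.sum_add_distrib] at hsum
  have := mul_le_mul_of_nonneg_left hsum (le_of_lt (by positivity :
    (0:ℝ) < 1 / (Fintype.card X : ℝ)))
  rw [hIdef]
  rw [Finset.sum_neg_distrib, mul_neg, mul_add] at this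
  linarith
end
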